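/- arXiv:1601.00914 — 2 statements merged into one kernel-verified Lean document; each statement's English description precedes it below -/
import Mathlib

section
/- For every ε > 0, lim_{N→∞} limsup_{T→∞} (1/T)·Leb{ u ∈ [T, 2T] : |B_N(u)| > N^{1/2+ε} } = 0, where B_N(u) = Σ_{n=1}^N cos(u·log p_n) and Leb denotes Lebesgue measure. That is, the probability that a uniformly random u ∈ [T,2T] gives |B_N(u)| exceeding N^{1/2+ε} tends to 0 in the iterated limit T → ∞ then N → ∞. -/
/-!
The frequencies `log p_n` are distinct and positive. Writing
`cos (u a) cos (u b) = (cos (u (a - b)) + cos (u (a + b))) / 2`, only the diagonal terms `a = b` of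
`∫_T^{2T} B_N(u)^2 du` grow with `T`, each like `T / 2`, while all the other terms stay bounded.
So `∫_T^{2T} B_N^2 = N T / 2 + O_N(1)`, and Chebyshev's inequality gives
`limsup_T (1/T) Leb{u ∈ [T, 2T] : |B_N(u)| > λ} ≤ N / (2 λ^2)`, which is `N^(-2ε) / 2` for
`λ = N^(1/2 + ε)`.
-/

open MeasureTheory Filter Real Finset

/-- For `k = 0` both sides vanish, since `2 / 0 = 0`. -/
lemma abs_integral_cos_mul_sub_le (k a b : ℝ) :
    |(∫ u in a..b, cos (u * k)) - if k = 0 then b - a else 0| ≤ 2 / |k| := by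
  rcases eq_or_ne k 0 with rfl | hk
  · simp
  rw [if_neg hk, sub_zero, intervalIntegral.integral_comp_mul_right cos hk, integral_cos,
    smul_eq_mul, abs_mul, abs_inv, mul_comm, ← div_eq_mul_inv]
  gcongr
  exact (abs_sub _ _).trans (by linarith [abs_sin_le_one (b * k), abs_sin_le_one (a * k)])

lemma abs_integral_cos_mul_cos_sub_le {x y : ℝ} (hxy : x + y ≠ 0) (a b : ℝ) :
    |(∫ u in a..b, cos (u * x) * cos (u * y)) - if x = y then (b - a) / 2 else 0|
      ≤ 1 / |x - y| + 1 / |x + y| := by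
  have hprod : ∀ u, cos (u * x) * cos (u * y) = (cos (u * (x - y)) + cos (u * (x + y))) / 2 := by
    intro u
    rw [mul_sub, mul_add, cos_sub, cos_add]
    ring
  have hcont : ∀ k, Continuous fun u => cos (u * k) := by fun_prop
  simp_rw [hprod]
  rw [intervalIntegral.integral_div, intervalIntegral.integral_add
    ((hcont _).intervalIntegrable _ _) ((hcont _).intervalIntegrable _ _)]
  have hdiff := abs_integral_cos_mul_sub_le (x - y) a b
  have hsum := abs_integral_cos_mul_sub_le (x + y) a b
  rw [if_neg hxy, sub_zero] at hsum
  simp only [sub_eq_zero] at hdiff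
  rw [div_eq_mul_one_div] at hdiff hsum
  obtain ⟨hdiff₁, hdiff₂⟩ := abs_le.mp hdiff
  obtain ⟨hsum₁, hsum₂⟩ := abs_le.mp hsum
  rw [abs_le]
  split_ifs at hdiff₁ hdiff₂ ⊢ <;> constructor <;> linarith

lemma abs_integral_sq_sum_cos_sub_le {ι : Type*} {ω : ι → ℝ} (hω : Function.Injective ω)
    (hpos : ∀ i, 0 < ω i) (s : Finset ι) (a b : ℝ) :
    |(∫ u in a..b, (∑ i ∈ s, cos (u * ω i)) ^ 2) - #s * (b - a) / 2|
      ≤ ∑ i ∈ s, ∑ j ∈ s, (1 / |ω i - ω j| + 1 / |ω i + ω j|) := by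
  have hcont : ∀ i j, Continuous fun u => cos (u * ω i) * cos (u * ω j) := by fun_prop
  have hexpand : ∫ u in a..b, (∑ i ∈ s, cos (u * ω i)) ^ 2
      = ∑ i ∈ s, ∑ j ∈ s, ∫ u in a..b, cos (u * ω i) * cos (u * ω j) := by
    simp_rw [sq, sum_mul_sum]
    rw [intervalIntegral.integral_finsetSum fun i _ =>
      (continuous_finsetSum _ fun j _ => hcont i j).intervalIntegrable a b]
    exact sum_congr rfl fun i _ =>
      intervalIntegral.integral_finsetSum fun j _ => (hcont i j).intervalIntegrable a b
  have hdiag : (#s : ℝ) * (b - a) / 2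
      = ∑ i ∈ s, ∑ j ∈ s, if ω i = ω j then (b - a) / 2 else 0 := by
    classical
    simp [hω.eq_iff, mul_div_assoc]
  rw [hexpand, hdiag, ← sum_sub_distrib]
  refine (abs_sum_le_sum_abs _ _).trans (sum_le_sum fun i _ => ?_)
  rw [← sum_sub_distrib]
  exact (abs_sum_le_sum_abs _ _).trans (sum_le_sum fun j _ =>
    abs_integral_cos_mul_cos_sub_le (add_pos (hpos i) (hpos j)).ne' a b)

lemma measureReal_lt_abs_le_integral_sq_div {α : Type*} [MeasurableSpace α] {μ : Measure α}
    [IsFiniteMeasure μ] {f : α → ℝ} (hf : Integrable (fun x => f x ^ 2) μ) {c : ℝ} (hc : 0 < c) :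
    μ.real {x | c < |f x|} ≤ (∫ x, f x ^ 2 ∂μ) / c ^ 2 := by
  rw [le_div_iff₀' (by positivity)]
  refine le_trans ?_
    (mul_meas_ge_le_integral_of_nonneg (.of_forall fun x => sq_nonneg (f x)) hf (c ^ 2))
  refine mul_le_mul_of_nonneg_left (measureReal_mono (fun x hx => ?_) (measure_ne_top _ _))
    (by positivity)
  simpa only [Set.mem_ofPred_eq, sq_abs] using pow_le_pow_left₀ hc.le (le_of_lt hx) 2

lemma volume_Icc_lt_abs_le_integral_sq_div {F : ℝ → ℝ} (hF : Continuous F) {a b c : ℝ}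
    (hab : a ≤ b) (hc : 0 < c) :
    (volume {u | u ∈ Set.Icc a b ∧ c < |F u|}).toReal ≤ (∫ u in a..b, F u ^ 2) / c ^ 2 := by
  have hcheb := measureReal_lt_abs_le_integral_sq_div (μ := volume.restrict (Set.Icc a b))
    ((hF.pow 2).integrableOn_Icc) hc
  rw [integral_Icc_eq_integral_Ioc, ← intervalIntegral.integral_of_le hab] at hcheb
  refine le_trans ?_ hcheb
  rw [measureReal_def, Set.ofPred_and, Set.ofPred_mem_eq, Set.inter_comm]
  exact ENNReal.toReal_mono (measure_ne_top _ _) (Measure.le_restrict_apply _ _)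

section VolumeRatio

variable {S : ℝ → Set ℝ} (hS : ∀ T, S T ⊆ Set.Icc T (2 * T))
include hS

lemma volume_div_mem_Icc {T : ℝ} (hT : 0 < T) : (volume (S T)).toReal / T ∈ Set.Icc 0 1 := by
  refine ⟨by positivity, (div_le_one hT).mpr ?_⟩
  calc (volume (S T)).toReal ≤ (volume (Set.Icc T (2 * T))).toReal :=
        ENNReal.toReal_mono measure_Icc_lt_top.ne (measure_mono (hS T))
    _ = T := by rw [Real.volume_Icc, ENNReal.toReal_ofReal (by linarith)]; ring

lemma limsup_volume_div_nonneg : 0 ≤ limsup (fun T => (volume (S T)).toReal / T) atTop := by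
  have hmem := (eventually_gt_atTop 0).mono fun T hT => volume_div_mem_Icc hS hT
  exact le_limsup_of_frequently_le (hmem.mono fun _ h => h.1).frequently
    (isBoundedUnder_of_eventually_le (hmem.mono fun _ h => h.2))

lemma limsup_volume_div_le {A K : ℝ} (hle : ∀ T > 0, (volume (S T)).toReal ≤ A * T + K) :
    limsup (fun T => (volume (S T)).toReal / T) atTop ≤ A := by
  have hmem := (eventually_gt_atTop 0).mono fun T hT => volume_div_mem_Icc hS hT
  have hbound : ∀ᶠ T in atTop, (volume (S T)).toReal / T ≤ A + K * T⁻¹ := by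
    filter_upwards [eventually_gt_atTop 0] with T hT
    rw [div_le_iff₀ hT, add_mul, mul_assoc, inv_mul_cancel₀ hT.ne', mul_one]
    exact hle T hT
  have hlim : Tendsto (fun T : ℝ => A + K * T⁻¹) atTop (nhds A) := by
    simpa using tendsto_const_nhds.add (tendsto_inv_atTop_zero.const_mul K)
  calc limsup (fun T => (volume (S T)).toReal / T) atTop
      ≤ limsup (fun T : ℝ => A + K * T⁻¹) atTop :=
        limsup_le_limsup hbound (isCoboundedUnder_le_of_eventually_le _ (hmem.mono fun _ h => h.1))
          hlim.isBoundedUnder_le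
    _ = A := hlim.limsup_eq

end VolumeRatio

lemma limsup_volume_lt_abs_sum_cos_div_le {ι : Type*} {ω : ι → ℝ} (hω : Function.Injective ω)
    (hpos : ∀ i, 0 < ω i) (s : Finset ι) {c : ℝ} (hc : 0 < c) :
    limsup (fun T : ℝ => (volume {u | u ∈ Set.Icc T (2 * T) ∧
      c < |∑ i ∈ s, cos (u * ω i)|}).toReal / T) atTop ≤ #s / 2 / c ^ 2 := by
  set K := ∑ i ∈ s, ∑ j ∈ s, (1 / |ω i - ω j| + 1 / |ω i + ω j|)
  refine limsup_volume_div_le (fun T => Set.sep_subset _ _) (K := K / c ^ 2) fun T hT => ?_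
  calc _ ≤ (∫ u in T..2 * T, (∑ i ∈ s, cos (u * ω i)) ^ 2) / c ^ 2 :=
        volume_Icc_lt_abs_le_integral_sq_div (by fun_prop) (by linarith) hc
    _ ≤ (#s * T / 2 + K) / c ^ 2 := by
        gcongr
        linarith [(abs_le.mp (abs_integral_sq_sum_cos_sub_le hω hpos s T (2 * T))).2]
    _ = #s / 2 / c ^ 2 * T + K / c ^ 2 := by ring

lemma log_nth_prime_pos (n : ℕ) : 0 < log (Nat.nth Nat.Prime n) :=
  log_pos (by exact_mod_cast (Nat.prime_nth_prime n).one_lt)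

lemma log_nth_prime_injective : Function.Injective fun n => log (Nat.nth Nat.Prime n) := by
  have hpos : ∀ n, ((Nat.nth Nat.Prime n : ℕ) : ℝ) ∈ Set.Ioi 0 := fun n =>
    Set.mem_Ioi.mpr (by exact_mod_cast (Nat.prime_nth_prime n).pos)
  exact fun n m h => Nat.nth_injective Nat.infinite_setOfPred_prime <| by
    exact_mod_cast log_injOn_pos (hpos n) (hpos m) h

lemma natCast_div_two_div_rpow_sq {N : ℕ} (hN : 0 < N) (ε : ℝ) :
    (N : ℝ) / 2 / ((N : ℝ) ^ ((1 : ℝ) / 2 + ε)) ^ 2 = (N : ℝ) ^ (-(2 * ε)) / 2 := by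
  have hN' : (0 : ℝ) < N := by exact_mod_cast hN
  rw [← rpow_natCast, ← rpow_mul hN'.le, rpow_neg hN'.le, Nat.cast_ofNat,
    show (1 / 2 + ε) * 2 = 1 + 2 * ε by ring, rpow_add hN', rpow_one]
  field_simp

/-- For every `ε > 0`, with `B_N(u) = ∑_{n=1}^N cos(u log p_n)`, the
probability that a uniformly random `u ∈ [T, 2T]` gives `|B_N(u)| > N^{1/2+ε}` tends
to `0` in the iterated limit: first `limsup` as `T → ∞`, then `N → ∞`. -/
theorem BN_small_probability (B : ℕ → ℝ → ℝ)
    (hB : ∀ N u, B N u = ∑ n ∈ Finset.range N, Real.cos (u * Real.log (Nat.nth Nat.Prime n)))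
    (ε : ℝ) (hε : 0 < ε) :
    Tendsto (fun N : ℕ =>
      Filter.limsup (fun T : ℝ =>
        (volume {u : ℝ | u ∈ Set.Icc T (2 * T) ∧
          (N : ℝ) ^ ((1 : ℝ) / 2 + ε) < |B N u|}).toReal / T) atTop)
      atTop (nhds 0) := by
  have hlim : Tendsto (fun N : ℕ => (N : ℝ) ^ (-(2 * ε)) / 2) atTop (nhds 0) := by
    simpa using ((tendsto_rpow_neg_atTop (by positivity)).comp tendsto_natCast_atTop_atTop).div_const 2
  refine tendsto_of_tendsto_of_tendsto_of_le_of_le' tendsto_const_nhds hlim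
    (.of_forall fun N => limsup_volume_div_nonneg fun T => Set.sep_subset _ _) ?_
  filter_upwards [eventually_gt_atTop 0] with N hN
  simp only [hB]
  have hbound := limsup_volume_lt_abs_sum_cos_div_le log_nth_prime_injective log_nth_prime_pos
    (range N) (c := (N : ℝ) ^ ((1 : ℝ) / 2 + ε)) (by positivity)
  rwa [card_range, natCast_div_two_div_rpow_sq hN] at hbound
end

section
/- Let χ be a non-principal Dirichlet character modulo k and let p_n denote the n-th prime. Suppose that for every real t there exists a constant C > 0 such that |Σ_{n=1}^N χ(p_n)·p_n^{-it}| ≤ C·√N for all positive integers N. Then for every complex s with Re(s) > 1/2, the Euler product Π_{n=1}^∞ (1 − χ(p_n)·p_n^{-s})^{-1} converges and equals the Dirichlet L-function L(s, χ); in particular, L(s, χ) ≠ 0 for all s with Re(s) > 1/2. -/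
/-!
Put `a_n = χ(p_n) p_n^{-it}`; the hypothesis says that the partial sums `A_N` of the `a_n`
are `O(√N)`. Summing by parts, `∑ a_n p_n^{-w} = ∑ A_{n+1} (p_n^{-w} - p_{n+1}^{-w})`, and
since `p_n^{-w} - p_{n+1}^{-w} = w ∫_{p_n}^{p_{n+1}} u^{-w-1} du` with `√(n+1) ≤ √p_n ≤ √u`, the
new series is dominated by a telescoping one and converges locally uniformly on `Re w > 1/2`. There
`log (1 - a_n p_n^{-w})⁻¹ - a_n p_n^{-w} = O(p_n^{-2 Re w})` is summable as well, so the partial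
Euler products converge to the exponential of a function holomorphic on `Re w > 1/2`. For
`Re w > 1` that limit is `L(w + it, χ)` by the classical Euler product, hence it is
`L(w + it, χ)` on the whole half-plane by analytic continuation, and it is nonzero because it is
an exponential. Take `w = Re s`, `t = Im s`.
-/

open Complex Filter Topology

lemma Finset.sum_range_mul_by_parts {R : Type*} [CommRing R] (a b : ℕ → R) (N : ℕ) :
    ∑ n ∈ range N, a n * b n =
      (∑ n ∈ range N, a n) * b N +
        ∑ n ∈ range N, (∑ k ∈ range (n + 1), a k) * (b n - b (n + 1)) := by
  induction N with
  | zero => simp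
  | succ N ih =>
    rw [sum_range_succ, ih, sum_range_succ (fun n ↦ (∑ k ∈ range (n + 1), a k) * (b n - b (n + 1))),
      sum_range_succ a]
    ring

/-- `x^{-w} - y^{-w} = w ∫_x^y u^{-w-1} du`, and the weight `x ^ θ` is moved under the integral
as `u ^ θ`. -/
lemma rpow_mul_norm_cpow_neg_sub_cpow_neg_le {x y θ σ : ℝ} {w : ℂ} (hx : 1 ≤ x) (hxy : x ≤ y)
    (hθ : 0 ≤ θ) (hθσ : θ < σ) (hσw : σ ≤ w.re) :
    x ^ θ * ‖(x : ℂ) ^ (-w) - (y : ℂ) ^ (-w)‖ ≤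
      ‖w‖ / (σ - θ) * (x ^ (θ - σ) - y ^ (θ - σ)) := by
  have hx0 : 0 < x := one_pos.trans_le hx
  have h0 : (0 : ℝ) ∉ Set.uIcc x y := by
    rw [Set.uIcc_of_le hxy]
    exact fun h ↦ hx0.not_ge h.1
  have hw : w ≠ 0 := by
    rintro rfl
    simp only [zero_re] at hσw
    linarith
  have hcpow : (x : ℂ) ^ (-w) - (y : ℂ) ^ (-w) = w * ∫ u in x..y, (u : ℂ) ^ (-w - 1) := by
    rw [integral_cpow (Or.inr ⟨by simpa [sub_eq_add_neg] using hw, h0⟩), sub_add_cancel, div_neg,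
      mul_neg, mul_div_cancel₀ _ hw, neg_sub]
  have hrpow : ∫ u in x..y, u ^ (θ - σ - 1) = (x ^ (θ - σ) - y ^ (θ - σ)) / (σ - θ) := by
    rw [integral_rpow (Or.inr ⟨by intro h; linarith, h0⟩), sub_add_cancel,
      div_eq_div_iff (by linarith) (by linarith)]
    ring
  have hint : ‖∫ u in x..y, (u : ℂ) ^ (-w - 1)‖ ≤ ∫ u in x..y, x ^ (-θ) * u ^ (θ - σ - 1) := by
    refine intervalIntegral.norm_integral_le_of_norm_le hxy (Eventually.of_forall fun u hu ↦ ?_) ?_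
    · have hxu : x ≤ u := hu.1.le
      have hu : 1 ≤ u := hx.trans hxu
      have hu0 : 0 < u := one_pos.trans_le hu
      calc ‖(u : ℂ) ^ (-w - 1)‖ = u ^ (-w.re - 1) := by
            simp [norm_cpow_eq_rpow_re_of_pos hu0]
        _ ≤ u ^ (-σ - 1) := Real.rpow_le_rpow_of_exponent_le hu (by linarith)
        _ = u ^ (-θ) * u ^ (θ - σ - 1) := by rw [← Real.rpow_add hu0]; ring_nf
        _ ≤ x ^ (-θ) * u ^ (θ - σ - 1) := by
            gcongr ?_ * _
            exact Real.rpow_le_rpow_of_nonpos hx0 hxu (neg_nonpos.mpr hθ)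
    · exact (continuousOn_const.mul (continuousOn_id.rpow_const fun u hu ↦
        Or.inl (ne_of_mem_of_not_mem hu h0))).intervalIntegrable
  rw [intervalIntegral.integral_const_mul, hrpow] at hint
  rw [hcpow, norm_mul]
  calc x ^ θ * (‖w‖ * ‖∫ u in x..y, (u : ℂ) ^ (-w - 1)‖)
      ≤ x ^ θ * (‖w‖ * (x ^ (-θ) * ((x ^ (θ - σ) - y ^ (θ - σ)) / (σ - θ)))) := by gcongr
    _ = _ := by
      rw [Real.rpow_neg hx0.le]
      field_simp

lemma Antitone.summable_sub_succ {c : ℕ → ℝ} {b : ℝ} (hc : Antitone c) (hb : ∀ n, b ≤ c n) :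
    Summable fun n ↦ c n - c (n + 1) :=
  summable_of_sum_range_le (c := c 0 - b) (fun n ↦ sub_nonneg.mpr (hc n.le_succ)) fun N ↦ by
    rw [Finset.sum_range_sub']
    linarith [hb N]

section AbelSummation

open Finset

variable {q : ℕ → ℕ} {a : ℕ → ℂ} {C θ σ τ M : ℝ} {w : ℂ}

/-- The series `∑ a n * q n ^ (-w)` summed by parts; in this form it converges absolutely. -/
noncomputable def abelSum (q : ℕ → ℕ) (a : ℕ → ℂ) (w : ℂ) : ℂ :=
  ∑' n, (∑ k ∈ range (n + 1), a k) * ((q n : ℂ) ^ (-w) - (q (n + 1) : ℂ) ^ (-w))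

lemma summable_rpow_sub_rpow_succ (hq : Monotone q) (hq0 : 0 < q 0) (hτ : τ ≤ 0) :
    Summable fun n ↦ (q n : ℝ) ^ τ - (q (n + 1) : ℝ) ^ τ := by
  have hpos (n : ℕ) : (0 : ℝ) < q n := by exact_mod_cast hq0.trans_le (hq n.zero_le)
  refine Antitone.summable_sub_succ (b := 0) (fun m n hmn ↦ ?_)
    fun n ↦ Real.rpow_nonneg (hpos n).le τ
  exact Real.rpow_le_rpow_of_nonpos (hpos m) (by exact_mod_cast hq hmn) hτ

lemma norm_abelSum_term_le (hq : StrictMono q) (hq0 : 0 < q 0)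
    (hA : ∀ N : ℕ, ‖∑ n ∈ range N, a n‖ ≤ C * (N : ℝ) ^ θ) (hθ : 0 ≤ θ) (hθσ : θ < σ)
    (hσw : σ ≤ w.re) (hwM : ‖w‖ ≤ M) (n : ℕ) :
    ‖(∑ k ∈ range (n + 1), a k) * ((q n : ℂ) ^ (-w) - (q (n + 1) : ℂ) ^ (-w))‖ ≤
      C * M / (σ - θ) * ((q n : ℝ) ^ (θ - σ) - (q (n + 1) : ℝ) ^ (θ - σ)) := by
  have hC : 0 ≤ C := by simpa using (norm_nonneg _).trans (hA 1)
  have hqn : (n : ℝ) + 1 ≤ q n := by exact_mod_cast (hq.add_le_nat n 0).trans' (by omega)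
  have hq_succ : (q n : ℝ) ≤ q (n + 1) := by exact_mod_cast hq.monotone n.le_succ
  have hdiff := rpow_mul_norm_cpow_neg_sub_cpow_neg_le (by linarith) hq_succ hθ hθσ hσw
  simp only [ofReal_natCast] at hdiff
  have hpartial : ‖∑ k ∈ range (n + 1), a k‖ ≤ C * (q n : ℝ) ^ θ :=
    (hA (n + 1)).trans (by push_cast; gcongr)
  rw [norm_mul]
  calc _ ≤ C * (q n : ℝ) ^ θ * ‖(q n : ℂ) ^ (-w) - (q (n + 1) : ℂ) ^ (-w)‖ := by gcongr
    _ ≤ C * (‖w‖ / (σ - θ) * ((q n : ℝ) ^ (θ - σ) - (q (n + 1) : ℝ) ^ (θ - σ))) := by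
      rw [mul_assoc]
      gcongr
    _ ≤ _ := by
      rw [mul_div_assoc, mul_assoc]
      have hanti : (q (n + 1) : ℝ) ^ (θ - σ) ≤ (q n : ℝ) ^ (θ - σ) :=
        Real.rpow_le_rpow_of_nonpos (by linarith) hq_succ (by linarith)
      gcongr

lemma summable_abelSum_term (hq : StrictMono q) (hq0 : 0 < q 0)
    (hA : ∀ N : ℕ, ‖∑ n ∈ range N, a n‖ ≤ C * (N : ℝ) ^ θ) (hθ : 0 ≤ θ) (hw : θ < w.re) :
    Summable fun n ↦ (∑ k ∈ range (n + 1), a k) * ((q n : ℂ) ^ (-w) - (q (n + 1) : ℂ) ^ (-w)) :=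
  ((summable_rpow_sub_rpow_succ hq.monotone hq0 (by linarith)).mul_left _).of_norm_bounded
    (norm_abelSum_term_le hq hq0 hA hθ hw le_rfl le_rfl)

lemma tendsto_sum_range_mul_cpow_abelSum (hq : StrictMono q) (hq0 : 0 < q 0)
    (hA : ∀ N : ℕ, ‖∑ n ∈ range N, a n‖ ≤ C * (N : ℝ) ^ θ) (hθ : 0 ≤ θ) (hw : θ < w.re) :
    Tendsto (fun N ↦ ∑ n ∈ range N, a n * (q n : ℂ) ^ (-w)) atTop (𝓝 (abelSum q a w)) := by
  have hq_pos (N : ℕ) : 0 < q N := hq0.trans_le (hq.monotone N.zero_le)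
  have hC : 0 ≤ C := by simpa using (norm_nonneg _).trans (hA 1)
  have hboundary : Tendsto (fun N ↦ (∑ n ∈ range N, a n) * (q N : ℂ) ^ (-w)) atTop (𝓝 0) := by
    have hdecay : Tendsto (fun N ↦ C * (q N : ℝ) ^ (-(w.re - θ))) atTop (𝓝 0) := by
      simpa using ((tendsto_rpow_neg_atTop (sub_pos.mpr hw)).comp
        (tendsto_natCast_atTop_atTop.comp hq.tendsto_atTop)).const_mul C
    refine squeeze_zero_norm (fun N ↦ ?_) hdecay
    have hN : (N : ℝ) ≤ q N := by exact_mod_cast hq.id_le N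
    rw [norm_mul, norm_natCast_cpow_of_pos (hq_pos N), neg_re]
    calc _ ≤ C * (q N : ℝ) ^ θ * (q N : ℝ) ^ (-w.re) := by
          gcongr
          exact (hA N).trans (by gcongr)
      _ = C * (q N : ℝ) ^ (-(w.re - θ)) := by
          rw [mul_assoc, ← Real.rpow_add (by exact_mod_cast hq_pos N)]
          ring_nf
  have := hboundary.add (summable_abelSum_term hq hq0 hA hθ hw).hasSum.tendsto_sum_nat
  rw [zero_add] at this
  exact this.congr fun N ↦ (sum_range_mul_by_parts a (fun n ↦ (q n : ℂ) ^ (-w)) N).symm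

lemma differentiableOn_abelSum (hq : StrictMono q) (hq0 : 0 < q 0)
    (hA : ∀ N : ℕ, ‖∑ n ∈ range N, a n‖ ≤ C * (N : ℝ) ^ θ) (hθ : 0 ≤ θ) :
    DifferentiableOn ℂ (abelSum q a) {w | θ < w.re} := by
  intro w₀ (hw₀ : θ < w₀.re)
  obtain ⟨σ, hθσ, hσw₀⟩ := exists_between hw₀
  set V := {w : ℂ | σ < w.re ∧ ‖w‖ < ‖w₀‖ + 1}
  have hV : IsOpen V :=
    (isOpen_lt continuous_const continuous_re).inter (isOpen_lt continuous_norm continuous_const)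
  have hq_ne (n : ℕ) : (q n : ℂ) ≠ 0 :=
    Nat.cast_ne_zero.mpr (hq0.trans_le (hq.monotone n.zero_le)).ne'
  have hterm (n : ℕ) : Differentiable ℂ fun w : ℂ ↦ (q n : ℂ) ^ (-w) :=
    differentiable_neg.const_cpow (Or.inl (hq_ne n))
  have hdiff : DifferentiableOn ℂ (abelSum q a) V :=
    differentiableOn_tsum_of_summable_norm
      ((summable_rpow_sub_rpow_succ hq.monotone hq0 (by linarith)).mul_left _)
      (fun n ↦ ((differentiable_const _).mul ((hterm n).sub (hterm (n + 1)))).differentiableOn) hV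
      fun n w hw ↦ norm_abelSum_term_le hq hq0 hA hθ hθσ hw.1.le hw.2.le n
  exact (hdiff.differentiableAt (hV.mem_nhds ⟨hσw₀, lt_add_one _⟩)).differentiableWithinAt

end AbelSummation

lemma Complex.inv_mem_slitPlane {z : ℂ} (hz : z ∈ slitPlane) : z⁻¹ ∈ slitPlane := by
  have hnormSq : 0 < normSq z := normSq_pos.mpr (slitPlane_ne_zero hz)
  rw [mem_slitPlane_iff, inv_re, inv_im] at *
  rcases hz with hre | him
  · exact Or.inl (div_pos hre hnormSq)
  · exact Or.inr (div_ne_zero (neg_ne_zero.mpr him) hnormSq.ne')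

lemma tendsto_prod_inv_one_sub {f : ℕ → ℂ} {S : ℂ} (hf : ∀ n, f n ≠ 1)
    (hS : Tendsto (fun N ↦ ∑ n ∈ Finset.range N, f n) atTop (𝓝 S))
    (hR : Summable fun n ↦ log (1 - f n)⁻¹ - f n) :
    Tendsto (fun N ↦ ∏ n ∈ Finset.range N, (1 - f n)⁻¹) atTop
      (𝓝 (exp (S + ∑' n, (log (1 - f n)⁻¹ - f n)))) := by
  refine (hS.add hR.hasSum.tendsto_sum_nat).cexp.congr fun N ↦ ?_
  rw [← Finset.sum_add_distrib, exp_sum]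
  refine Finset.prod_congr rfl fun n _ ↦ ?_
  rw [add_sub_cancel, exp_log (inv_ne_zero (sub_ne_zero.mpr (hf n).symm))]

lemma eqOn_re_gt_of_eqOn_re_gt {f g : ℂ → ℂ} {a b : ℝ} (hf : DifferentiableOn ℂ f {w | a < w.re})
    (hg : DifferentiableOn ℂ g {w | a < w.re}) (hab : a ≤ b) (hfg : Set.EqOn f g {w | b < w.re}) :
    Set.EqOn f g {w | a < w.re} := by
  have hopen (c : ℝ) : IsOpen {w : ℂ | c < w.re} := isOpen_lt continuous_const continuous_re
  have hb : ((b + 1 : ℝ) : ℂ) ∈ {w : ℂ | b < w.re} := by simp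
  exact (hf.analyticOnNhd (hopen a)).eqOn_of_preconnected_of_eventuallyEq
    (hg.analyticOnNhd (hopen a)) (convex_halfSpace_re_gt a).isPreconnected
    (show a < ((b + 1 : ℝ) : ℂ).re by simp; linarith)
    (eventuallyEq_of_mem ((hopen b).mem_nhds hb) hfg)

lemma norm_log_one_sub_inv_sub_self_le_of_le {z : ℂ} {r : ℝ} (hz : ‖z‖ ≤ r) (hr : r < 1) :
    ‖log (1 - z)⁻¹ - z‖ ≤ (1 - r)⁻¹ / 2 * ‖z‖ ^ 2 := by
  calc _ ≤ ‖z‖ ^ 2 * (1 - ‖z‖)⁻¹ / 2 := norm_log_one_sub_inv_sub_self_le (hz.trans_lt hr)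
    _ ≤ ‖z‖ ^ 2 * (1 - r)⁻¹ / 2 := by gcongr
    _ = _ := by ring

lemma norm_mul_natCast_cpow_neg_le {c w : ℂ} {m : ℕ} {σ : ℝ} (hc : ‖c‖ ≤ 1) (hm : 0 < m)
    (hσw : σ ≤ w.re) : ‖c * (m : ℂ) ^ (-w)‖ ≤ (m : ℝ) ^ (-σ) := by
  rw [norm_mul, norm_natCast_cpow_of_pos hm, neg_re]
  calc _ ≤ 1 * (m : ℝ) ^ (-w.re) := by gcongr
    _ ≤ _ := by
      rw [one_mul]
      exact Real.rpow_le_rpow_of_exponent_le (Nat.one_le_cast.mpr hm) (by linarith)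

lemma two_rpow_neg_half_lt_one : (2 : ℝ) ^ (-(1 / 2 : ℝ)) < 1 :=
  Real.rpow_lt_one_of_one_lt_of_neg one_lt_two (by norm_num)

section EulerProduct

open Finset

variable {q : ℕ → ℕ} {a : ℕ → ℂ} {C σ τ : ℝ} {w : ℂ}

noncomputable def eulerLogRemainder (q : ℕ → ℕ) (a : ℕ → ℂ) (w : ℂ) : ℂ :=
  ∑' n, (log (1 - a n * (q n : ℂ) ^ (-w))⁻¹ - a n * (q n : ℂ) ^ (-w))

noncomputable def eulerProductExtension (q : ℕ → ℕ) (a : ℕ → ℂ) (w : ℂ) : ℂ :=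
  exp (abelSum q a w + eulerLogRemainder q a w)

lemma norm_eulerTerm_le_two_rpow_neg_half (hq : Monotone q) (hq0 : 1 < q 0)
    (ha : ∀ n, ‖a n‖ ≤ 1) (hw : 1 / 2 ≤ w.re) (n : ℕ) :
    ‖a n * (q n : ℂ) ^ (-w)‖ ≤ (2 : ℝ) ^ (-(1 / 2 : ℝ)) := by
  have hq2 : 2 ≤ q n := hq0.trans_le (hq n.zero_le)
  exact (norm_mul_natCast_cpow_neg_le (ha n) (by omega) hw).trans
    (Real.rpow_le_rpow_of_nonpos two_pos (by exact_mod_cast hq2) (by norm_num))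

lemma norm_log_one_sub_inv_sub_eulerTerm_le (hq : Monotone q) (hq0 : 1 < q 0)
    (ha : ∀ n, ‖a n‖ ≤ 1) (hσ : 1 / 2 ≤ σ) (hσw : σ ≤ w.re) (n : ℕ) :
    ‖log (1 - a n * (q n : ℂ) ^ (-w))⁻¹ - a n * (q n : ℂ) ^ (-w)‖ ≤
      (1 - (2 : ℝ) ^ (-(1 / 2 : ℝ)))⁻¹ / 2 * (q n : ℝ) ^ (-(2 * σ)) := by
  have hq_pos : 0 < q n := hq0.pos.trans_le (hq n.zero_le)
  have hσ_bound := norm_mul_natCast_cpow_neg_le (ha n) hq_pos hσw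
  refine (norm_log_one_sub_inv_sub_self_le_of_le
    (norm_eulerTerm_le_two_rpow_neg_half hq hq0 ha (hσ.trans hσw) n)
    two_rpow_neg_half_lt_one).trans ?_
  rw [mul_comm 2 σ, ← neg_mul, Real.rpow_mul (Nat.cast_nonneg _), Real.rpow_two]
  gcongr
  exact div_nonneg (inv_nonneg.mpr (sub_nonneg.mpr two_rpow_neg_half_lt_one.le)) zero_le_two

lemma summable_natCast_rpow_comp (hq : Function.Injective q) (hτ : τ < -1) :
    Summable fun n ↦ (q n : ℝ) ^ τ :=
  (Real.summable_nat_rpow.mpr hτ).comp_injective hq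

lemma differentiableOn_eulerLogRemainder (hq : StrictMono q) (hq0 : 1 < q 0)
    (ha : ∀ n, ‖a n‖ ≤ 1) : DifferentiableOn ℂ (eulerLogRemainder q a) {w | 1 / 2 < w.re} := by
  intro w₀ (hw₀ : 1 / 2 < w₀.re)
  obtain ⟨σ, hσ, hσw₀⟩ := exists_between hw₀
  have hV : IsOpen {w : ℂ | σ < w.re} := isOpen_lt continuous_const continuous_re
  have hterm (n : ℕ) : DifferentiableOn ℂ (fun w : ℂ ↦
      log (1 - a n * (q n : ℂ) ^ (-w))⁻¹ - a n * (q n : ℂ) ^ (-w)) {w | σ < w.re} := by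
    intro w (hw : σ < w.re)
    have hq_pos : 0 < q n := hq0.pos.trans_le (hq.monotone n.zero_le)
    have hf : Differentiable ℂ fun w : ℂ ↦ a n * (q n : ℂ) ^ (-w) :=
      (differentiable_neg.const_cpow (Or.inl (Nat.cast_ne_zero.mpr hq_pos.ne'))).const_mul _
    have hslit : 1 - a n * (q n : ℂ) ^ (-w) ∈ slitPlane := by
      rw [sub_eq_add_neg]
      refine mem_slitPlane_of_norm_lt_one ((norm_neg _).trans_lt ?_)
      exact (norm_eulerTerm_le_two_rpow_neg_half hq.monotone hq0 ha (by linarith) n).trans_lt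
        two_rpow_neg_half_lt_one
    exact (((((differentiableAt_const 1).sub (hf w)).inv (slitPlane_ne_zero hslit)).clog
      (inv_mem_slitPlane hslit)).sub (hf w)).differentiableWithinAt
  have hdiff : DifferentiableOn ℂ (eulerLogRemainder q a) {w | σ < w.re} :=
    differentiableOn_tsum_of_summable_norm
      ((summable_natCast_rpow_comp hq.injective (by linarith)).mul_left _)
      hterm hV fun n w (hw : σ < w.re) ↦
        norm_log_one_sub_inv_sub_eulerTerm_le hq.monotone hq0 ha hσ.le hw.le n
  exact (hdiff.differentiableAt (hV.mem_nhds hσw₀)).differentiableWithinAt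

lemma differentiableOn_eulerProductExtension (hq : StrictMono q) (hq0 : 1 < q 0)
    (ha : ∀ n, ‖a n‖ ≤ 1) (hA : ∀ N : ℕ, ‖∑ n ∈ range N, a n‖ ≤ C * (N : ℝ) ^ (1 / 2 : ℝ)) :
    DifferentiableOn ℂ (eulerProductExtension q a) {w | 1 / 2 < w.re} :=
  ((differentiableOn_abelSum hq hq0.pos hA (by norm_num)).add
    (differentiableOn_eulerLogRemainder hq hq0 ha)).cexp

lemma tendsto_prod_eulerProductExtension (hq : StrictMono q) (hq0 : 1 < q 0)
    (ha : ∀ n, ‖a n‖ ≤ 1) (hA : ∀ N : ℕ, ‖∑ n ∈ range N, a n‖ ≤ C * (N : ℝ) ^ (1 / 2 : ℝ))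
    (hw : 1 / 2 < w.re) :
    Tendsto (fun N ↦ ∏ n ∈ range N, (1 - a n * (q n : ℂ) ^ (-w))⁻¹) atTop
      (𝓝 (eulerProductExtension q a w)) := by
  refine tendsto_prod_inv_one_sub (fun n h ↦ ?_)
    (tendsto_sum_range_mul_cpow_abelSum hq hq0.pos hA (by norm_num) hw)
    (((summable_natCast_rpow_comp hq.injective (by linarith)).mul_left _).of_norm_bounded
      (norm_log_one_sub_inv_sub_eulerTerm_le hq.monotone hq0 ha hw.le le_rfl))
  have := norm_eulerTerm_le_two_rpow_neg_half hq.monotone hq0 ha hw.le n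
  rw [h, norm_one] at this
  exact two_rpow_neg_half_lt_one.not_ge this

end EulerProduct

noncomputable def Nat.nthPrimeEquiv : ℕ ≃ Nat.Primes :=
  Equiv.ofBijective (fun n ↦ ⟨Nat.nth Nat.Prime n, Nat.prime_nth_prime n⟩)
    ⟨fun _ _ h ↦ Nat.nth_injective Nat.infinite_setOfPred_prime (congrArg Subtype.val h), fun p ↦ by
      obtain ⟨n, hn⟩ : p.1 ∈ Set.range (Nat.nth Nat.Prime) := by
        rw [Nat.range_nth_of_infinite Nat.infinite_setOfPred_prime]
        exact p.2
      exact ⟨n, Subtype.ext hn⟩⟩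

lemma DirichletCharacter.tendsto_prod_nth_prime_eulerFactor {k : ℕ} [NeZero k]
    (χ : DirichletCharacter ℂ k) {s : ℂ} (hs : 1 < s.re) :
    Tendsto (fun N ↦ ∏ n ∈ Finset.range N,
        (1 - χ (Nat.nth Nat.Prime n) * ((Nat.nth Nat.Prime n : ℕ) : ℂ) ^ (-s))⁻¹)
      atTop (𝓝 (LFunction χ s)) := by
  rw [LFunction_eq_LSeries χ hs]
  exact (Nat.nthPrimeEquiv.hasProd_iff.mpr (LSeries_eulerProduct_hasProd χ hs)).tendsto_prod_nat

lemma DirichletCharacter.tendsto_prod_nth_prime_eulerFactor_of_twisted_sum_le {k : ℕ} [NeZero k]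
    {χ : DirichletCharacter ℂ k} (hχ : χ ≠ 1) {t C : ℝ}
    (hC : ∀ N : ℕ, ‖∑ n ∈ Finset.range N,
      χ (Nat.nth Nat.Prime n) * ((Nat.nth Nat.Prime n : ℕ) : ℂ) ^ (-(I * t))‖ ≤ C * Real.sqrt N)
    {w : ℂ} (hw : 1 / 2 < w.re) :
    Tendsto (fun N ↦ ∏ n ∈ Finset.range N,
        (1 - χ (Nat.nth Nat.Prime n) * ((Nat.nth Nat.Prime n : ℕ) : ℂ) ^ (-(w + I * t)))⁻¹)
      atTop (𝓝 (LFunction χ (w + I * t))) ∧ LFunction χ (w + I * t) ≠ 0 := by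
  set p := Nat.nth Nat.Prime
  have hp : StrictMono p := Nat.nth_strictMono Nat.infinite_setOfPred_prime
  have hp0 : 1 < p 0 := by simp [p, Nat.nth_prime_zero_eq_two]
  set a : ℕ → ℂ := fun n ↦ χ (p n) * (p n : ℂ) ^ (-(I * t))
  have htwist (w : ℂ) (n : ℕ) : a n * (p n : ℂ) ^ (-w) = χ (p n) * (p n : ℂ) ^ (-(w + I * t)) := by
    rw [mul_assoc, ← cpow_add _ _ (Nat.cast_ne_zero.mpr (Nat.prime_nth_prime n).ne_zero)]
    congr 2
    ring
  have ha (n : ℕ) : ‖a n‖ ≤ 1 := by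
    refine (norm_mul_natCast_cpow_neg_le (χ.norm_le_one _) (Nat.prime_nth_prime n).pos
      (σ := 0) (by simp)).trans_eq ?_
    simp
  have hA (N : ℕ) : ‖∑ n ∈ Finset.range N, a n‖ ≤ C * (N : ℝ) ^ (1 / 2 : ℝ) := by
    rw [← Real.sqrt_eq_rpow]
    exact hC N
  have hL : Set.EqOn (eulerProductExtension p a) (fun w ↦ LFunction χ (w + I * t))
      {w | 1 / 2 < w.re} := by
    refine eqOn_re_gt_of_eqOn_re_gt (differentiableOn_eulerProductExtension hp hp0 ha hA)
      ((differentiable_LFunction hχ).comp (differentiable_id.add_const _)).differentiableOn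
      one_half_lt_one.le fun w (hw : 1 < w.re) ↦ ?_
    refine tendsto_nhds_unique (tendsto_prod_eulerProductExtension hp hp0 ha hA (by linarith)) ?_
    simpa only [htwist] using χ.tendsto_prod_nth_prime_eulerFactor (s := w + I * t) (by simpa)
  have hLw : eulerProductExtension p a w = LFunction χ (w + I * t) := hL hw
  refine ⟨?_, hLw ▸ exp_ne_zero _⟩
  simpa only [htwist, hLw] using tendsto_prod_eulerProductExtension hp hp0 ha hA hw

/-- Let `χ` be a non-principal Dirichlet character mod `k`.  If for every real
`t` there is a constant `C > 0` with `|∑_{n=1}^N χ(p_n) p_n^{-it}| ≤ C √N` for all `N`, then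
for every `s` with `Re(s) > 1/2` the Euler product `∏_n (1 − χ(p_n) p_n^{-s})⁻¹` converges
to `L(s, χ)`, and in particular `L(s, χ) ≠ 0`. -/
theorem nonprincipal_euler_product_RH (k : ℕ) [NeZero k] (χ : DirichletCharacter ℂ k)
    (hχ : χ ≠ 1)
    (hrw : ∀ t : ℝ, ∃ C : ℝ, 0 < C ∧ ∀ N : ℕ, 0 < N →
      ‖∑ n ∈ Finset.range N,
          χ (Nat.nth Nat.Prime n) * ((Nat.nth Nat.Prime n : ℕ) : ℂ) ^ (-(I * t))‖ ≤
        C * Real.sqrt N) :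
    ∀ s : ℂ, 1 / 2 < s.re →
      Tendsto (fun N : ℕ => ∏ n ∈ Finset.range N,
          (1 - χ (Nat.nth Nat.Prime n) * ((Nat.nth Nat.Prime n : ℕ) : ℂ) ^ (-s))⁻¹)
        atTop (nhds (DirichletCharacter.LFunction χ s)) ∧
      DirichletCharacter.LFunction χ s ≠ 0 := by
  intro s hs
  obtain ⟨C, -, hC⟩ := hrw s.im
  have hC' (N : ℕ) : ‖∑ n ∈ Finset.range N,
      χ (Nat.nth Nat.Prime n) * ((Nat.nth Nat.Prime n : ℕ) : ℂ) ^ (-(I * s.im))‖ ≤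
        C * Real.sqrt N := by
    rcases N.eq_zero_or_pos with rfl | hN
    · simp
    · exact hC N hN
  have hs_split : (s.re : ℂ) + I * s.im = s := by rw [mul_comm]; exact re_add_im s
  simpa only [hs_split] using
    χ.tendsto_prod_nth_prime_eulerFactor_of_twisted_sum_le hχ hC' (w := s.re) (by rwa [ofReal_re])
end
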